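/- Abstract stability of the constrained conforming correction: if d solves the saddle-point system (d,w)_{H^1} + (p̄, ∇·w) = 0 for all w in the conforming space and (∇·d, q̄) = −(∇·v, q̄) for all constants q̄ ∈ ℝ, then testing w = d + α p̄ 𝐱 for small α > 0 yields ‖d‖²_{H^1} + c(α)‖p̄‖² ≤ C ‖mean(∇·v)‖², so in particular ‖d‖_{H^1} ≤ C ‖mean(∇·v)‖_{L²(Ω)}. -/

import Mathlib

/-!
Testing the first equation with `w = 𝐱` identifies the multiplier, `p̄ = -⟪d, 𝐱⟫`, so
`|p̄| ≤ ‖d‖ ‖𝐱‖`; testing it with `w = d` and using the constraint gives `‖d‖² = p̄ · mean(∇·v)`.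
Together, `‖d‖² ≤ ‖𝐱‖ ‖d‖ |mean(∇·v)|`.
-/

section SaddlePoint

variable {V : Type*} [NormedAddCommGroup V] [InnerProductSpace ℝ V]
  {D : V →ₗ[ℝ] ℝ} {d xe : V} {p : ℝ}

lemma saddle_multiplier_eq (hsys : ∀ w : V, inner ℝ d w + p * D w = 0) (hxe : D xe = 1) :
    p = -inner ℝ d xe := by
  have := hsys xe
  rw [hxe, mul_one] at this
  linarith

lemma saddle_norm_sq_eq (hsys : ∀ w : V, inner ℝ d w + p * D w = 0) :
    ‖d‖ ^ 2 = -(p * D d) := by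
  rw [← real_inner_self_eq_norm_sq]
  linarith [hsys d]

lemma saddle_norm_le (hsys : ∀ w : V, inner ℝ d w + p * D w = 0) (hxe : D xe = 1) :
    ‖d‖ ≤ ‖xe‖ * |D d| := by
  have hp : |p| ≤ ‖d‖ * ‖xe‖ := by
    rw [saddle_multiplier_eq hsys hxe, abs_neg]
    exact abs_real_inner_le_norm d xe
  have hsq : ‖d‖ * ‖d‖ ≤ ‖d‖ * (‖xe‖ * |D d|) :=
    calc ‖d‖ * ‖d‖ = -(p * D d) := by rw [← sq, saddle_norm_sq_eq hsys]
      _ ≤ |p| * |D d| := by rw [← abs_mul]; exact neg_le_abs _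
      _ ≤ ‖d‖ * ‖xe‖ * |D d| := by gcongr
      _ = ‖d‖ * (‖xe‖ * |D d|) := mul_assoc _ _ _
  rcases (norm_nonneg d).eq_or_lt with hd | hd
  · rw [← hd]
    positivity
  · exact le_of_mul_le_mul_left hsq hd

end SaddlePoint

theorem stmt_13_general {V : Type*} [NormedAddCommGroup V] [InnerProductSpace ℝ V]
    (D : V →ₗ[ℝ] ℝ) (xe : V) (hxe : D xe = 1) :
    ∃ C > (0 : ℝ), ∀ (d v : V) (pbar : ℝ),
      (∀ w : V, inner ℝ d w + pbar * D w = 0) →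
      D d = -(D v) →
      ‖d‖ ≤ C * |D v| := by
  have hxe0 : xe ≠ 0 := by
    rintro rfl
    simp at hxe
  refine ⟨‖xe‖, norm_pos_iff.mpr hxe0, fun d v pbar hsys hdd => ?_⟩
  simpa only [hdd, abs_neg] using saddle_norm_le hsys hxe

/-- abstract stability of the constrained conforming correction.
`V` is the conforming subspace equipped with the `H¹` inner product,
`D : V →ₗ ℝ` represents `w ↦ |Ω|⁻¹ ∫_Ω ∇·w` (the mean divergence), and
`xe ∈ V` is the field `𝐱` (normalized so that `D xe = 1`). If `d` and the
constant multiplier `p̄` solve the square saddle-point system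
`⟪d,w⟫ + p̄ D w = 0` for all `w ∈ V` and `D d = −(mean ∇·v) = −D v`,
then `‖d‖ ≤ C |mean(∇·v)|` with `C` depending only on the space data. -/
theorem stmt_13 {V : Type*} [NormedAddCommGroup V] [InnerProductSpace ℝ V]
    [FiniteDimensional ℝ V]
    (D : V →ₗ[ℝ] ℝ) (xe : V) (hxe : D xe = 1) :
    ∃ C > (0 : ℝ), ∀ (d v : V) (pbar : ℝ),
      (∀ w : V, inner ℝ d w + pbar * D w = 0) →
      D d = -(D v) →
      ‖d‖ ≤ C * |D v| :=
  stmt_13_general D xe hxe
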